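/- Let B be a Boolean algebra, S a finite subset of B closed under meet ⊓ and containing ⊤, let □ᵢ, □ⱼ, □ᵢⱼ : B → B all satisfy the modal axioms (m.i) and (m.ii), axiom (m.iv) (□ᵢ x ≤ □ᵢⱼ x and □ⱼ x ≤ □ᵢⱼ x) and (m.indep) (□ᵢⱼ x ≤ □ᵢ x ⊔ □ⱼ x), and let p be a finitely additive probability on B. Then the fused basic belief assignment satisfies, for every φ ∈ S: p(φ^{□ᵢⱼ}) = ∑_{(η,ξ)∈S×S: η⊓ξ = φ} p(η^{□ᵢ} ⊓ ξ^{□ⱼ}). -/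

import Mathlib

/-!
For a modal operator `□` and a meet-closed finite `S ∋ ⊤`, the bpas `φ^□` (`φ ∈ S`) are pairwise
disjoint and cover `⊤`. So the cells `η^{□ᵢ} ⊓ ξ^{□ⱼ}` (`η, ξ ∈ S`) partition `⊤`, and by finite
additivity the theorem reduces to the identity `φ^{□ᵢⱼ} = ⊔_{η ⊓ ξ = φ} η^{□ᵢ} ⊓ ξ^{□ⱼ}`.
Axiom (m.iv) puts each cell below `□ᵢⱼ(η ⊓ ξ)`, and (m.indep) keeps it off `□ᵢⱼ ψ` for
`ψ < η ⊓ ξ`, since the cell is off both `□ᵢ ψ` and `□ⱼ ψ`. Conversely `φ^{□ᵢⱼ}` misses a cell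
with `η ⊓ ξ ≠ φ`: either `η ⊓ ξ < φ`, or by (m.indep) it lies in `□ᵢ φ ⊔ □ⱼ φ`, which is off
`η^{□ᵢ}` when `η ≰ φ` and off `ξ^{□ⱼ}` when `ξ ≰ φ`.
-/

open scoped Classical

/-- The basic propositional assignment (bpa) of `φ`:
`φ^□ = □φ ⊓ (⊔_{ψ ∈ S, ψ < φ} □ψ)ᶜ`. -/
noncomputable def bpa {B : Type*} [BooleanAlgebra B]
    (S : Finset B) (box : B → B) (φ : B) : B :=
  box φ ⊓ ((S.filter fun ψ => ψ < φ).sup box)ᶜ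

structure IsModalOperator {B : Type*} [BooleanAlgebra B] (box : B → B) : Prop where
  map_top : box ⊤ = ⊤
  map_compl_sup_le : ∀ x y : B, box (xᶜ ⊔ y) ≤ (box x)ᶜ ⊔ box y

namespace IsModalOperator

variable {B : Type*} [BooleanAlgebra B] {box : B → B}

theorem map_himp_le (h : IsModalOperator box) (x y : B) : box (x ⇨ y) ≤ box x ⇨ box y := by
  simpa only [himp_eq, sup_comm] using h.map_compl_sup_le x y

theorem monotone (h : IsModalOperator box) : Monotone box := fun x y hxy =>
  calc box x = box x ⊓ box (x ⇨ y) := by rw [himp_eq_top_iff.2 hxy, h.map_top, inf_top_eq]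
    _ ≤ box x ⊓ (box x ⇨ box y) := inf_le_inf_left _ (h.map_himp_le x y)
    _ ≤ box y := inf_himp_le

theorem inf_le_map_inf (h : IsModalOperator box) (x y : B) : box x ⊓ box y ≤ box (x ⊓ y) :=
  le_himp_iff.1 <| (h.monotone (le_himp_iff.2 le_rfl)).trans (h.map_himp_le y (x ⊓ y))

end IsModalOperator

section Bpa

variable {B : Type*} [BooleanAlgebra B] (S : Finset B)

theorem bpa_le (box : B → B) (φ : B) : bpa S box φ ≤ box φ :=
  inf_le_left

theorem disjoint_bpa_of_lt {box : B → B} {φ ψ : B} (hψ : ψ ∈ S) (hψφ : ψ < φ) :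
    Disjoint (bpa S box φ) (box ψ) :=
  disjoint_compl_left.mono inf_le_right (Finset.le_sup (Finset.mem_filter.2 ⟨hψ, hψφ⟩))

theorem disjoint_bpa_of_not_le {box : B → B} (hS : ∀ x ∈ S, ∀ y ∈ S, x ⊓ y ∈ S)
    (hbox : IsModalOperator box) {φ ψ : B} (hφ : φ ∈ S) (hψ : ψ ∈ S) (hφψ : ¬φ ≤ ψ) :
    Disjoint (bpa S box φ) (box ψ) := by
  have hlt : φ ⊓ ψ < φ := inf_lt_left.2 hφψ
  rw [disjoint_iff_inf_le]
  calc bpa S box φ ⊓ box ψ ≤ bpa S box φ ⊓ box (φ ⊓ ψ) :=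
        le_inf inf_le_left ((inf_le_inf_right _ (bpa_le S box φ)).trans (hbox.inf_le_map_inf φ ψ))
    _ ≤ ⊥ := (disjoint_bpa_of_lt S (hS φ hφ ψ hψ) hlt).le_bot

theorem pairwiseDisjoint_bpa {box : B → B} (hS : ∀ x ∈ S, ∀ y ∈ S, x ⊓ y ∈ S)
    (hbox : IsModalOperator box) :
    (S : Set B).PairwiseDisjoint (bpa S box) := by
  intro φ hφ ψ hψ hne
  by_cases hφψ : φ ≤ ψ
  · have hψφ : ¬ψ ≤ φ := fun h => hne (le_antisymm hφψ h)
    exact (disjoint_bpa_of_not_le S hS hbox hψ hφ hψφ).symm.mono_left (bpa_le S box φ)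
  · exact (disjoint_bpa_of_not_le S hS hbox hφ hψ hφψ).mono_right (bpa_le S box ψ)

theorem map_le_sup_bpa (box : B → B) {φ : B} (hφ : φ ∈ S) : box φ ≤ S.sup (bpa S box) := by
  refine S.finite_toSet.wellFoundedOn.induction (r := (· < ·))
    (P := fun φ => box φ ≤ S.sup (bpa S box)) hφ fun φ hφ ih => ?_
  calc box φ ≤ bpa S box φ ⊔ (S.filter fun ψ => ψ < φ).sup box := by
        rw [bpa, ← sdiff_eq]; exact le_sdiff_sup
    _ ≤ S.sup (bpa S box) := sup_le (Finset.le_sup hφ) <| Finset.sup_le fun ψ hψ =>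
        ih ψ (Finset.mem_filter.1 hψ).1 (Finset.mem_filter.1 hψ).2

theorem sup_bpa_eq_top {box : B → B} (htop : ⊤ ∈ S) (hbox : IsModalOperator box) :
    S.sup (bpa S box) = ⊤ :=
  top_le_iff.1 (hbox.map_top ▸ map_le_sup_bpa S box htop)

end Bpa

section Fusion

variable {B : Type*} [BooleanAlgebra B] (S : Finset B) {boxI boxJ boxIJ : B → B}

theorem inf_bpa_le_bpa_inf (hIJ : IsModalOperator boxIJ) (hIle : ∀ x, boxI x ≤ boxIJ x)
    (hJle : ∀ x, boxJ x ≤ boxIJ x) (hindep : ∀ x, boxIJ x ≤ boxI x ⊔ boxJ x) (η ξ : B) :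
    bpa S boxI η ⊓ bpa S boxJ ξ ≤ bpa S boxIJ (η ⊓ ξ) := by
  refine le_inf ?_ (le_compl_iff_disjoint_right.2 (Finset.disjoint_sup_right.2 fun ψ hψ => ?_))
  · exact (inf_le_inf ((bpa_le S boxI η).trans (hIle η)) ((bpa_le S boxJ ξ).trans (hJle ξ))).trans
      (hIJ.inf_le_map_inf η ξ)
  · obtain ⟨hψS, hψlt⟩ := Finset.mem_filter.1 hψ
    have hdI := disjoint_bpa_of_lt S hψS (hψlt.trans_le inf_le_left) (box := boxI)
    have hdJ := disjoint_bpa_of_lt S hψS (hψlt.trans_le inf_le_right) (box := boxJ)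
    exact ((hdI.mono_left inf_le_left).sup_right (hdJ.mono_left inf_le_right)).mono_right
      (hindep ψ)

theorem disjoint_bpa_inf_bpa (hS : ∀ x ∈ S, ∀ y ∈ S, x ⊓ y ∈ S) (hI : IsModalOperator boxI)
    (hJ : IsModalOperator boxJ) (hIJ : IsModalOperator boxIJ) (hIle : ∀ x, boxI x ≤ boxIJ x)
    (hJle : ∀ x, boxJ x ≤ boxIJ x) (hindep : ∀ x, boxIJ x ≤ boxI x ⊔ boxJ x)
    {φ η ξ : B} (hφ : φ ∈ S) (hη : η ∈ S) (hξ : ξ ∈ S) (hne : η ⊓ ξ ≠ φ) :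
    Disjoint (bpa S boxIJ φ) (bpa S boxI η ⊓ bpa S boxJ ξ) := by
  by_cases hle : η ⊓ ξ ≤ φ
  · exact (disjoint_bpa_of_lt S (hS η hη ξ hξ) (hle.lt_of_ne hne)).mono_right
      ((inf_bpa_le_bpa_inf S hIJ hIle hJle hindep η ξ).trans (bpa_le S boxIJ _))
  · have hdI := disjoint_bpa_of_not_le S hS hI hη hφ fun h => hle (inf_le_of_left_le h)
    have hdJ := disjoint_bpa_of_not_le S hS hJ hξ hφ fun h => hle (inf_le_of_right_le h)
    exact ((hdI.symm.mono_right inf_le_left).sup_left (hdJ.symm.mono_right inf_le_right)).mono_left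
      ((bpa_le S boxIJ φ).trans (hindep φ))

theorem bpa_eq_sup_inf_bpa (hS : ∀ x ∈ S, ∀ y ∈ S, x ⊓ y ∈ S) (htop : ⊤ ∈ S)
    (hI : IsModalOperator boxI) (hJ : IsModalOperator boxJ) (hIJ : IsModalOperator boxIJ)
    (hIle : ∀ x, boxI x ≤ boxIJ x) (hJle : ∀ x, boxJ x ≤ boxIJ x)
    (hindep : ∀ x, boxIJ x ≤ boxI x ⊔ boxJ x) {φ : B} (hφ : φ ∈ S) :
    bpa S boxIJ φ = ((S ×ˢ S).filter fun q => q.1 ⊓ q.2 = φ).sup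
      fun q => bpa S boxI q.1 ⊓ bpa S boxJ q.2 := by
  refine le_antisymm ?_ (Finset.sup_le fun q hq => ?_)
  · calc bpa S boxIJ φ = bpa S boxIJ φ ⊓ (S.sup (bpa S boxI) ⊓ S.sup (bpa S boxJ)) := by
          rw [sup_bpa_eq_top S htop hI, sup_bpa_eq_top S htop hJ, inf_top_eq, inf_top_eq]
      _ = (S ×ˢ S).sup fun q => bpa S boxIJ φ ⊓ (bpa S boxI q.1 ⊓ bpa S boxJ q.2) := by
          rw [Finset.sup_inf_sup, Finset.sup_inf_distrib_left]
      _ ≤ _ := Finset.sup_le fun q hq => by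
          obtain ⟨hη, hξ⟩ := Finset.mem_product.1 hq
          by_cases hqφ : q.1 ⊓ q.2 = φ
          · exact inf_le_right.trans
              (Finset.le_sup (f := fun q => bpa S boxI q.1 ⊓ bpa S boxJ q.2)
                (Finset.mem_filter.2 ⟨hq, hqφ⟩))
          · rw [(disjoint_bpa_inf_bpa S hS hI hJ hIJ hIle hJle hindep hφ hη hξ hqφ).eq_bot]
            exact bot_le
  · rw [← (Finset.mem_filter.1 hq).2]
    exact inf_bpa_le_bpa_inf S hIJ hIle hJle hindep q.1 q.2

end Fusion

theorem Set.PairwiseDisjoint.prod_inf {α ι κ : Type*} [DistribLattice α] [OrderBot α]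
    {s : Set ι} {t : Set κ} {f : ι → α} {g : κ → α} (hs : s.PairwiseDisjoint f)
    (ht : t.PairwiseDisjoint g) : (s ×ˢ t).PairwiseDisjoint fun q => f q.1 ⊓ g q.2 := by
  rintro ⟨i, j⟩ ⟨hi, hj⟩ ⟨i', j'⟩ ⟨hi', hj'⟩ hne
  by_cases hii' : i = i'
  · subst hii'
    exact (ht hj hj' fun h => hne (Prod.ext rfl h)).mono inf_le_right inf_le_right
  · exact (hs hi hi' hii').mono inf_le_left inf_le_left

theorem map_finset_sup_eq_sum {α ι M : Type*} [DistribLattice α] [OrderBot α]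
    [AddCancelCommMonoid M] (p : α → M) (hadd : ∀ x y, Disjoint x y → p (x ⊔ y) = p x + p y)
    {s : Finset ι} {f : ι → α} (hs : (s : Set ι).PairwiseDisjoint f) :
    p (s.sup f) = ∑ i ∈ s, p (f i) := by
  induction s using Finset.induction_on with
  | empty => simpa using hadd ⊥ ⊥ disjoint_bot_left
  | insert a s ha ih =>
    rw [Finset.coe_insert, Set.pairwiseDisjoint_insert_of_notMem (by simpa using ha)] at hs
    rw [Finset.sup_insert, Finset.sum_insert ha,
      hadd _ _ (Finset.disjoint_sup_right.2 fun i hi => hs.2 i hi), ih hs.1]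

theorem fused_bba_eq_sum_general {B : Type*} [BooleanAlgebra B]
    (S : Finset B)
    (hmeet : ∀ x ∈ S, ∀ y ∈ S, x ⊓ y ∈ S)
    (htop : ⊤ ∈ S)
    (boxI boxJ boxIJ : B → B)
    (miI : boxI ⊤ = ⊤)
    (miiI : ∀ x y : B, boxI (xᶜ ⊔ y) ≤ (boxI x)ᶜ ⊔ boxI y)
    (miJ : boxJ ⊤ = ⊤)
    (miiJ : ∀ x y : B, boxJ (xᶜ ⊔ y) ≤ (boxJ x)ᶜ ⊔ boxJ y)
    (miIJ : boxIJ ⊤ = ⊤)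
    (miiIJ : ∀ x y : B, boxIJ (xᶜ ⊔ y) ≤ (boxIJ x)ᶜ ⊔ boxIJ y)
    (mivI : ∀ x : B, boxI x ≤ boxIJ x)
    (mivJ : ∀ x : B, boxJ x ≤ boxIJ x)
    (mindep : ∀ x : B, boxIJ x ≤ boxI x ⊔ boxJ x)
    (p : B → ℝ)
    (hpadd : ∀ x y : B, x ⊓ y = ⊥ → p (x ⊔ y) = p x + p y) :
    ∀ φ ∈ S,
      p (bpa S boxIJ φ) =
        ∑ q ∈ (S ×ˢ S).filter fun q => q.1 ⊓ q.2 = φ,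
          p (bpa S boxI q.1 ⊓ bpa S boxJ q.2) := by
  intro φ hφ
  have hI : IsModalOperator boxI := ⟨miI, miiI⟩
  have hJ : IsModalOperator boxJ := ⟨miJ, miiJ⟩
  have hcells : ((S ×ˢ S : Finset (B × B)) : Set (B × B)).PairwiseDisjoint
      fun q => bpa S boxI q.1 ⊓ bpa S boxJ q.2 := by
    rw [Finset.coe_product]
    exact (pairwiseDisjoint_bpa S hmeet hI).prod_inf (pairwiseDisjoint_bpa S hmeet hJ)
  rw [bpa_eq_sup_inf_bpa S hmeet htop hI hJ ⟨miIJ, miiIJ⟩ mivI mivJ mindep hφ]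
  exact map_finset_sup_eq_sum p (fun x y h => hpadd x y h.eq_bot)
    (hcells.subset (Finset.coe_subset.2 (Finset.filter_subset _ _)))

/-- The fused basic belief assignment satisfies
`p(φ^{□ᵢⱼ}) = ∑_{η⊓ξ = φ} p(η^{□ᵢ} ⊓ ξ^{□ⱼ})` for every `φ ∈ S`. -/
theorem fused_bba_eq_sum {B : Type*} [BooleanAlgebra B]
    (S : Finset B)
    (hmeet : ∀ x ∈ S, ∀ y ∈ S, x ⊓ y ∈ S)
    (htop : ⊤ ∈ S)
    (boxI boxJ boxIJ : B → B)
    (miI : boxI ⊤ = ⊤)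
    (miiI : ∀ x y : B, boxI (xᶜ ⊔ y) ≤ (boxI x)ᶜ ⊔ boxI y)
    (miJ : boxJ ⊤ = ⊤)
    (miiJ : ∀ x y : B, boxJ (xᶜ ⊔ y) ≤ (boxJ x)ᶜ ⊔ boxJ y)
    (miIJ : boxIJ ⊤ = ⊤)
    (miiIJ : ∀ x y : B, boxIJ (xᶜ ⊔ y) ≤ (boxIJ x)ᶜ ⊔ boxIJ y)
    (mivI : ∀ x : B, boxI x ≤ boxIJ x)
    (mivJ : ∀ x : B, boxJ x ≤ boxIJ x)
    (mindep : ∀ x : B, boxIJ x ≤ boxI x ⊔ boxJ x)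
    (p : B → ℝ)
    (hp0 : ∀ x : B, 0 ≤ p x)
    (hptop : p ⊤ = 1)
    (hpadd : ∀ x y : B, x ⊓ y = ⊥ → p (x ⊔ y) = p x + p y) :
    ∀ φ ∈ S,
      p (bpa S boxIJ φ) =
        ∑ q ∈ (S ×ˢ S).filter fun q => q.1 ⊓ q.2 = φ,
          p (bpa S boxI q.1 ⊓ bpa S boxJ q.2) :=
  fused_bba_eq_sum_general S hmeet htop boxI boxJ boxIJ miI miiI miJ miiJ miIJ miiIJ mivI mivJ
    mindep p hpadd
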